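/- arXiv:1802.04862 — 5 statements merged into one kernel-verified Lean document; each statement's English description precedes it below -/
import Mathlib

section
/- Let r ≥ 1 and let w_1, …, w_ℓ be elements of the free group F_r. If the product w_1 w_2 ⋯ w_ℓ does not lie in the commutator subgroup [F_r, F_r], then for every n ≥ 1 one has Tr_{w_1,…,w_ℓ}(n) = 0. -/
/-! Multiplying each generator `A_j` by a scalar unitary `χ(x_j) • 1`, for a character
`χ : F_r → U(1)`, preserves the Haar measure and multiplies `tr w(A)` by `χ(w)`, so
`Tr_{w_1,…,w_ℓ}(n) = χ(w_1 ⋯ w_ℓ) · Tr_{w_1,…,w_ℓ}(n)`. Outside `[F_r, F_r]` some exponent sum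
`m` of `w_1 ⋯ w_ℓ` is nonzero, and sending the corresponding generator to `exp(iπ/m)` gives a
character with `χ(w_1 ⋯ w_ℓ) = -1`. -/

open MeasureTheory

/-- The unitary group `U(n)` gets the Borel σ-algebra of its subspace topology. -/
noncomputable instance (n : ℕ) : MeasurableSpace (Matrix.unitaryGroup (Fin n) ℂ) := borel _

/-- `Tr_{w_1,…,w_ℓ}(n)`: the integral over `ℓ` independent Haar-random unitaries of the
product of traces of the words `w i` evaluated at the random tuple. -/
noncomputable def trwl (r n ℓ : ℕ) (μ : Measure (Matrix.unitaryGroup (Fin n) ℂ))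
    [IsProbabilityMeasure μ] (w : Fin ℓ → FreeGroup (Fin r)) : ℂ :=
  ∫ A : Fin r → Matrix.unitaryGroup (Fin n) ℂ,
    ∏ i : Fin ℓ,
      Matrix.trace ((FreeGroup.lift A (w i) : Matrix.unitaryGroup (Fin n) ℂ) :
        Matrix (Fin n) (Fin n) ℂ)
    ∂(Measure.pi fun _ : Fin r => μ)

-- These make multiplication on `U(n)` measurable, as Haar-invariance of the integral requires.
instance (n : ℕ) : BorelSpace (Matrix.unitaryGroup (Fin n) ℂ) := ⟨rfl⟩

instance (n : ℕ) : SecondCountableTopology (Matrix (Fin n) (Fin n) ℂ) :=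
  inferInstanceAs (SecondCountableTopology (Fin n → Fin n → ℂ))

instance (n : ℕ) : SecondCountableTopology (Matrix.unitaryGroup (Fin n) ℂ) :=
  TopologicalSpace.secondCountableTopology_induced _ _ Subtype.val

theorem FreeGroup.exists_hom_circle_ne_one {α : Type*} {p : FreeGroup α}
    (hp : p ∉ commutator (FreeGroup α)) : ∃ χ : FreeGroup α →* Circle, χ p ≠ 1 := by
  rw [← Abelianization.ker_of, MonoidHom.mem_ker] at hp
  let a : FreeAbelianGroup α := Additive.ofMul (Abelianization.of p)
  obtain ⟨k, hk⟩ := FreeAbelianGroup.nonempty_support_iff.2 (show a ≠ 0 from hp)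
  have hm : (FreeAbelianGroup.coeff k a : ℝ) ≠ 0 :=
    Int.cast_ne_zero.2 ((FreeAbelianGroup.mem_support_iff k a).1 hk)
  refine ⟨(zpowersHom Circle (Circle.exp (Real.pi / FreeAbelianGroup.coeff k a))).comp
    ((AddMonoidHom.toMultiplicativeRight (α := Abelianization (FreeGroup α))
      (FreeAbelianGroup.coeff k)).comp Abelianization.of), ?_⟩
  rw [MonoidHom.comp_apply, MonoidHom.comp_apply]
  show Circle.exp _ ^ FreeAbelianGroup.coeff k a ≠ 1
  rw [← Circle.exp_zsmul, zsmul_eq_mul, mul_div_cancel₀ _ hm]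
  exact Circle.exp_pi_ne_one

def Matrix.scalarUnitary (n : Type*) [Fintype n] [DecidableEq n] :
    Circle →* Matrix.unitaryGroup n ℂ where
  toFun z := ⟨(z : ℂ) • 1, by
    simp [Matrix.mem_unitaryGroup_iff, smul_smul, Complex.conj_mul', Circle.norm_coe]⟩
  map_one' := by ext1; simp
  map_mul' z z' := by ext1; simp [smul_smul, mul_comm]

@[simp]
lemma Matrix.coe_scalarUnitary {n : Type*} [Fintype n] [DecidableEq n] (z : Circle) :
    (Matrix.scalarUnitary n z : Matrix n n ℂ) = (z : ℂ) • 1 :=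
  rfl

lemma Matrix.commute_scalarUnitary {n : Type*} [Fintype n] [DecidableEq n] (z : Circle)
    (x : Matrix.unitaryGroup n ℂ) : Commute (Matrix.scalarUnitary n z) x :=
  Subtype.ext ((Commute.one_left (x : Matrix n n ℂ)).smul_left (z : ℂ)).eq

lemma Matrix.trace_scalarUnitary_mul {n : Type*} [Fintype n] [DecidableEq n] (z : Circle)
    (x : Matrix.unitaryGroup n ℂ) :
    ((Matrix.scalarUnitary n z * x : Matrix.unitaryGroup n ℂ) : Matrix n n ℂ).trace =
      z * (x : Matrix n n ℂ).trace := by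
  rw [Submonoid.coe_mul, coe_scalarUnitary, smul_mul_assoc, one_mul, trace_smul, smul_eq_mul]

lemma FreeGroup.lift_mul_of_commute {α G : Type*} [Group G] (φ : FreeGroup α →* G)
    (hφ : ∀ g x, Commute (φ g) x) (A : α → G) (g : FreeGroup α) :
    FreeGroup.lift (fun j => φ (FreeGroup.of j) * A j) g = φ g * FreeGroup.lift A g := by
  induction g using FreeGroup.induction_on with
  | C1 => simp
  | of j => simp
  | inv_of j h => simp [(hφ _ _).inv_left.eq]
  | mul a b ha hb =>
    rw [_root_.map_mul, ha, hb, _root_.map_mul, _root_.map_mul, (hφ b _).mul_mul_mul_comm]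

lemma trwl_eq_mul_self (r n ℓ : ℕ) (μ : Measure (Matrix.unitaryGroup (Fin n) ℂ))
    [IsProbabilityMeasure μ] [μ.IsMulLeftInvariant] (w : Fin ℓ → FreeGroup (Fin r))
    (χ : FreeGroup (Fin r) →* Circle) :
    trwl r n ℓ μ w = χ (List.ofFn w).prod * trwl r n ℓ μ w := by
  let f (A : Fin r → Matrix.unitaryGroup (Fin n) ℂ) : ℂ :=
    ∏ i, ((FreeGroup.lift A (w i) : Matrix.unitaryGroup (Fin n) ℂ) :
      Matrix (Fin n) (Fin n) ℂ).trace
  let c (j : Fin r) : Matrix.unitaryGroup (Fin n) ℂ :=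
    Matrix.scalarUnitary (Fin n) (χ (FreeGroup.of j))
  have hf (A : Fin r → Matrix.unitaryGroup (Fin n) ℂ) :
      f (c * A) = χ (List.ofFn w).prod * f A := by
    have hlift := FreeGroup.lift_mul_of_commute ((Matrix.scalarUnitary (Fin n)).comp χ)
      (fun g => Matrix.commute_scalarUnitary (χ g)) A
    simp only [f, show c * A = fun j => c j * A j from rfl, c, MonoidHom.comp_apply] at hlift ⊢
    simp only [hlift, Matrix.trace_scalarUnitary_mul, Finset.prod_mul_distrib]
    rw [map_list_prod, List.map_ofFn, List.prod_ofFn]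
    exact congrArg (· * _) (map_prod Circle.coeHom _ _).symm
  calc trwl r n ℓ μ w = ∫ A, f (c * A) ∂Measure.pi fun _ => μ :=
        (integral_mul_left_eq_self f c).symm
    _ = χ (List.ofFn w).prod * trwl r n ℓ μ w := by
        simp only [hf]
        exact integral_const_mul _ _

theorem trwl_eq_zero_of_not_mem_commutator_general (r ℓ : ℕ)
    (w : Fin ℓ → FreeGroup (Fin r))
    (hw : (List.ofFn w).prod ∉ commutator (FreeGroup (Fin r)))
    (n : ℕ)
    (μ : Measure (Matrix.unitaryGroup (Fin n) ℂ)) [μ.IsHaarMeasure]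
    [IsProbabilityMeasure μ] :
    trwl r n ℓ μ w = 0 := by
  obtain ⟨χ, hχ⟩ := FreeGroup.exists_hom_circle_ne_one hw
  exact (mul_left_eq_self₀.1 (trwl_eq_mul_self r n ℓ μ w χ).symm).resolve_left
    (mt Circle.coe_eq_one.1 hχ)

/-- If `w₁ w₂ ⋯ w_ℓ` is not in the commutator subgroup of the free group `F_r`, then
`Tr_{w_1,…,w_ℓ}(n) = 0` for every `n ≥ 1`. -/
theorem trwl_eq_zero_of_not_mem_commutator (r ℓ : ℕ) (hr : 1 ≤ r)
    (w : Fin ℓ → FreeGroup (Fin r))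
    (hw : (List.ofFn w).prod ∉ commutator (FreeGroup (Fin r)))
    (n : ℕ) (hn : 1 ≤ n)
    (μ : Measure (Matrix.unitaryGroup (Fin n) ℂ)) [μ.IsHaarMeasure]
    [IsProbabilityMeasure μ] :
    trwl r n ℓ μ w = 0 :=
  trwl_eq_zero_of_not_mem_commutator_general r ℓ w hw n μ
end

section
/- Let r ≥ 1, let w_1 ∈ [F_r,F_r] and let w_2 ∈ F_r with w_2 ∉ [F_r,F_r]. Then there exists N such that for every n ≥ N, the w_1-measure on U(n) is different from the w_2-measure on U(n), i.e. the pushforward of μ_n^{⊗r} under A ↦ w_1(A) differs from the pushforward under A ↦ w_2(A). -/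
/-! The determinant of `w(A)` separates the two measures. As `A ↦ det w(A)` comes from a
homomorphism `F_r → U(1)` into an abelian group, it is identically `1` when `w ∈ [F_r, F_r]`.
If `w ∉ [F_r, F_r]`, some `ψ : F_r →* ℤ` has `ψ w ≠ 0`; choosing a scalar unitary `z` with
`det(z)^{ψ w} = -1` and translating the tuple `A` by `(z^{ψ x_k})_k` preserves Haar measure but
flips the sign of `det w(A)`, so its mean vanishes. Hence for every `n ≥ 1` the mean of `det` is
`1` under the `w₁`-measure and `0` under the `w₂`-measure. -/

open MeasureTheory

instance inst_s6 (n : ℕ) : SecondCountableTopology (Matrix.unitaryGroup (Fin n) ℂ) :=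
  have : SecondCountableTopology (Matrix (Fin n) (Fin n) ℂ) :=
    inferInstanceAs (SecondCountableTopology (Fin n → Fin n → ℂ))
  Topology.IsEmbedding.subtypeVal.secondCountableTopology

namespace FreeGroup

variable {α G : Type*} [Group G]

theorem map_lift_mul {M : Type*} [CommMonoid M] (χ : G →* M) (u A : α → G) (w : FreeGroup α) :
    χ (lift (u * A) w) = χ (lift u w) * χ (lift A w) :=
  DFunLike.congr_fun (ext_hom (χ.comp (lift (u * A))) (χ.comp (lift u) * χ.comp (lift A))
    fun a => by simp) w

theorem exists_monoidHom_ne_one_of_notMem_commutator {w : FreeGroup α}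
    (hw : w ∉ commutator (FreeGroup α)) : ∃ ψ : FreeGroup α →* Multiplicative ℤ, ψ w ≠ 1 := by
  classical
  let a : FreeAbelianGroup α := Additive.ofMul (Abelianization.of w)
  have ha : a ≠ 0 := fun h => hw <| (QuotientGroup.eq_one_iff w).mp h
  obtain ⟨k, hk⟩ := FreeAbelianGroup.nonempty_support_iff.mpr ha
  exact ⟨(FreeAbelianGroup.coeff k).toMultiplicativeRight.comp Abelianization.of,
    fun h => (FreeAbelianGroup.mem_support_iff k a).mp hk (Multiplicative.ofAdd.injective h)⟩

section Topology

variable [TopologicalSpace G] [IsTopologicalGroup G]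

theorem continuous_lift_apply (w : FreeGroup α) : Continuous fun A : α → G => lift A w := by
  induction w using FreeGroup.induction_on with
  | C1 => simpa using continuous_const
  | of x => simpa using continuous_apply x
  | inv_of x _ => exact (continuous_apply x).inv.congr fun A => by simp
  | mul x y hx hy =>
    simp only [_root_.map_mul]
    exact hx.mul hy

theorem integral_map_lift [Fintype α] [SecondCountableTopology G] [MeasurableSpace G]
    [BorelSpace G] {E : Type*} [NormedAddCommGroup E] [NormedSpace ℝ E] (ν : Measure (α → G))
    {f : G → E} (hf : Continuous f) (w : FreeGroup α) :
    ∫ g, f g ∂ν.map (fun A => lift A w) = ∫ A, f (lift A w) ∂ν :=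
  integral_map (continuous_lift_apply w).aemeasurable hf.aestronglyMeasurable

end Topology

end FreeGroup

theorem Complex.exists_unitary_zpow_eq_neg_one {k : ℤ} (hk : k ≠ 0) :
    ∃ ζ : unitary ℂ, ζ ^ k = -1 := by
  let z : ℂ := Circle.exp (Real.pi / k)
  have hz : z ∈ unitary ℂ := by
    rw [Unitary.mem_iff_star_mul_self, Complex.star_def, Complex.conj_mul', Circle.norm_coe]
    simp
  refine ⟨⟨z, hz⟩, Subtype.ext ?_⟩
  have hk' : (k : ℂ) ≠ 0 := by exact_mod_cast hk
  rw [Unitary.coe_zpow, Unitary.coe_neg, OneMemClass.coe_one, Circle.coe_exp,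
    ← Complex.exp_int_mul]
  convert Complex.exp_pi_mul_I using 2
  push_cast
  field_simp

namespace Matrix.UnitaryGroup

variable {ι α : Type*} [Fintype ι] [DecidableEq ι] [CommRing α] [StarRing α]

noncomputable def detHom : unitaryGroup ι α →* unitary α :=
  (detMonoidHom.comp (unitaryGroup ι α).subtype).codRestrict (unitary α)
    fun A => det_of_mem_unitary A.2

@[simp]
theorem coe_detHom (A : unitaryGroup ι α) :
    (detHom A : α) = (A : Matrix ι ι α).det :=
  rfl

theorem detHom_smul_one (ζ : unitary α) :
    detHom (ζ • (1 : unitaryGroup ι α)) = ζ ^ Fintype.card ι := by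
  ext
  simp [Unitary.coe_smul, Submonoid.smul_def]

theorem exists_detHom_zpow_eq_neg_one [Nonempty ι] {m : ℤ} (hm : m ≠ 0) :
    ∃ z : unitaryGroup ι ℂ, detHom z ^ m = -1 := by
  obtain ⟨ζ, hζ⟩ := Complex.exists_unitary_zpow_eq_neg_one
    (mul_ne_zero (Nat.cast_ne_zero.mpr Fintype.card_ne_zero) hm : (Fintype.card ι : ℤ) * m ≠ 0)
  exact ⟨ζ • 1, by rw [detHom_smul_one, ← hζ, _root_.zpow_mul, zpow_natCast]⟩

theorem exists_freeGroup_monoidHom_detHom_eq_neg_one [Nonempty ι] {X : Type*} {w : FreeGroup X}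
    (hw : w ∉ commutator (FreeGroup X)) :
    ∃ φ : FreeGroup X →* unitaryGroup ι ℂ, detHom (φ w) = -1 := by
  obtain ⟨ψ, hψ⟩ := FreeGroup.exists_monoidHom_ne_one_of_notMem_commutator hw
  obtain ⟨z, hz⟩ := exists_detHom_zpow_eq_neg_one (ι := ι) (m := (ψ w).toAdd) hψ
  exact ⟨(zpowersHom _ z).comp ψ, by simpa using hz⟩

section WordMeasure

variable {X : Type*} [Fintype X] {n : ℕ} (μ : Measure (unitaryGroup (Fin n) ℂ))

theorem integral_detHom_lift_of_mem_commutator [IsProbabilityMeasure μ] {w : FreeGroup X}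
    (hw : w ∈ commutator (FreeGroup X)) :
    ∫ A, (detHom (FreeGroup.lift A w) : ℂ) ∂Measure.pi (fun _ => μ) = 1 := by
  have h : ∀ A : X → unitaryGroup (Fin n) ℂ, detHom (FreeGroup.lift A w) = 1 := fun A =>
    Abelianization.commutator_subset_ker (detHom.comp (FreeGroup.lift A)) hw
  simp [h]

theorem integral_detHom_lift_of_notMem_commutator [SigmaFinite μ] [μ.IsMulLeftInvariant]
    (hn : n ≠ 0) {w : FreeGroup X} (hw : w ∉ commutator (FreeGroup X)) :
    ∫ A, (detHom (FreeGroup.lift A w) : ℂ) ∂Measure.pi (fun _ => μ) = 0 := by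
  have := Fin.pos_iff_nonempty.mp (Nat.pos_of_ne_zero hn)
  obtain ⟨φ, hφ⟩ := exists_freeGroup_monoidHom_detHom_eq_neg_one (ι := Fin n) hw
  refine integral_eq_zero_of_mul_left_eq_neg (g := fun a => φ (FreeGroup.of a)) fun A => ?_
  rw [FreeGroup.map_lift_mul, ← FreeGroup.lift_unique φ fun _ => rfl, hφ, neg_one_mul,
    Unitary.coe_neg]

end WordMeasure

end Matrix.UnitaryGroup

theorem wordMeasure_ne_of_commutator_not_commutator_general (r : ℕ)
    (w₁ w₂ : FreeGroup (Fin r))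
    (h₁ : w₁ ∈ commutator (FreeGroup (Fin r)))
    (h₂ : w₂ ∉ commutator (FreeGroup (Fin r))) :
    ∃ N : ℕ, ∀ n : ℕ, N ≤ n →
      ∀ (μ : Measure (Matrix.unitaryGroup (Fin n) ℂ)) [μ.IsHaarMeasure]
        [IsProbabilityMeasure μ],
        Measure.map (fun A : Fin r → Matrix.unitaryGroup (Fin n) ℂ => FreeGroup.lift A w₁)
            (Measure.pi fun _ : Fin r => μ) ≠
        Measure.map (fun A : Fin r → Matrix.unitaryGroup (Fin n) ℂ => FreeGroup.lift A w₂)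
            (Measure.pi fun _ : Fin r => μ) := by
  refine ⟨1, fun n hn μ _ _ hμ => ?_⟩
  let meanDet (ν : Measure (Matrix.unitaryGroup (Fin n) ℂ)) : ℂ :=
    ∫ g, (Matrix.UnitaryGroup.detHom g : ℂ) ∂ν
  have hdet : Continuous fun g : Matrix.unitaryGroup (Fin n) ℂ =>
      (Matrix.UnitaryGroup.detHom g : ℂ) :=
    continuous_subtype_val.matrix_det
  have key : meanDet _ = meanDet _ := congrArg meanDet hμ
  simp only [meanDet, FreeGroup.integral_map_lift _ hdet,
    Matrix.UnitaryGroup.integral_detHom_lift_of_mem_commutator μ h₁,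
    Matrix.UnitaryGroup.integral_detHom_lift_of_notMem_commutator μ (by omega) h₂] at key
  exact one_ne_zero key

/-- If `w₁` is in the commutator subgroup and `w₂` is not, then for all sufficiently
large `n` the two induced word measures on `U(n)` are different. -/
theorem wordMeasure_ne_of_commutator_not_commutator (r : ℕ) (hr : 1 ≤ r)
    (w₁ w₂ : FreeGroup (Fin r))
    (h₁ : w₁ ∈ commutator (FreeGroup (Fin r)))
    (h₂ : w₂ ∉ commutator (FreeGroup (Fin r))) :
    ∃ N : ℕ, ∀ n : ℕ, N ≤ n →
      ∀ (μ : Measure (Matrix.unitaryGroup (Fin n) ℂ)) [μ.IsHaarMeasure]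
        [IsProbabilityMeasure μ],
        Measure.map (fun A : Fin r → Matrix.unitaryGroup (Fin n) ℂ => FreeGroup.lift A w₁)
            (Measure.pi fun _ : Fin r => μ) ≠
        Measure.map (fun A : Fin r → Matrix.unitaryGroup (Fin n) ℂ => FreeGroup.lift A w₂)
            (Measure.pi fun _ : Fin r => μ) :=
  wordMeasure_ne_of_commutator_not_commutator_general r w₁ w₂ h₁ h₂
end

section
/- Let C be a nonempty finite linearly ordered type. Let P_C = {(i,j) ∈ C × C : i ≤ j}, partially ordered by (i₁,j₁) ≼ (i₂,j₂) iff i₂ ≤ i₁ and j₁ ≤ j₂. Let |P_C| ⊆ stdSimplex(ℝ, P_C) be the geometric realization of the order complex of P_C, i.e. the set of points of the standard simplex on the vertex set P_C whose support is a chain with respect to ≼. Then the map F : |P_C| → stdSimplex(ℝ, C) defined by F(x)(c) = ½ Σ_{(i,j) ∈ P_C, i = c} x(i,j) + ½ Σ_{(i,j) ∈ P_C, j = c} x(i,j) is a homeomorphism from |P_C| onto the full standard simplex stdSimplex(ℝ, C); in particular F is a continuous bijection onto stdSimplex(ℝ, C). -/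
/-!
A point `x ∈ |P_C|` is a probability measure on a chain of nested intervals `[i, j]` of `C`.
The sets `{[i', j'] : i' ≤ i}` and `{[i', j'] : j ≤ j'}` are up-sets for `≼`, and up-sets meet a
chain in nested sets, so the mass of an intersection of two of them is the minimum of their
masses; moreover the mass of `{i' ≤ i}` is `min (2 y(≤ i)) 1` for `y = F x`. Inclusion–exclusion
therefore recovers `x` from `y`. Conversely, for `y ∈ Δ(C)` the intervals between the left and
right `t/2`-quantiles of `y` grow with `t ∈ [0, 1]`; pushing Lebesgue measure on `[0, 1]` forward
along them gives a preimage of `y` in `|P_C|`, and it is given by the same formula.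
-/

open Finset

variable {C : Type*} [Fintype C] [LinearOrder C]

/-- The poset `P_C` of pairs `(i,j)` with `i ≤ j` in a linear order `C`. -/
def pairPoset (C : Type*) [LinearOrder C] : Type _ := {p : C × C // p.1 ≤ p.2}

/-- The partial order on `P_C`: `(i₁,j₁) ≼ (i₂,j₂)` iff `i₂ ≤ i₁` and `j₁ ≤ j₂`. -/
def pairLE (a b : pairPoset C) : Prop :=
  b.val.1 ≤ a.val.1 ∧ a.val.2 ≤ b.val.2

noncomputable instance : Fintype (pairPoset C) := by
  unfold pairPoset; infer_instance

/-- The geometric realization of the order complex of `P_C`: the points of the standard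
simplex on the vertex set `P_C` whose support is a chain for `≼`. -/
def pairRealization (C : Type*) [Fintype C] [LinearOrder C] :
    Set (pairPoset C → ℝ) :=
  {x | x ∈ stdSimplex ℝ (pairPoset C) ∧ IsChain pairLE (Function.support x)}

section ChainSupport

variable {α : Type*} {r : α → α → Prop} {x : α → ℝ} {P Q : α → Prop}

theorem imp_or_imp_of_isChain_support (hch : IsChain r (Function.support x))
    (hP : ∀ a b, r a b → P a → P b) (hQ : ∀ a b, r a b → Q a → Q b) :
    (∀ a, x a ≠ 0 → P a → Q a) ∨ (∀ a, x a ≠ 0 → Q a → P a) := by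
  by_contra! ⟨⟨a, ha, hPa, hQa⟩, ⟨b, hb, hQb, hPb⟩⟩
  have hab : a ≠ b := by rintro rfl; exact hQa hQb
  rcases hch ha hb hab with h | h
  · exact hPb (hP a b h hPa)
  · exact hQa (hQ b a h hQb)

theorem sum_filter_le_sum_filter [Fintype α] [DecidablePred P] [DecidablePred Q] (hx : 0 ≤ x)
    (h : ∀ a, P a → Q a) : ∑ a with P a, x a ≤ ∑ a with Q a, x a :=
  sum_le_sum_of_subset_of_nonneg (monotone_filter_right _ fun a _ => h a) fun a _ _ => hx a

theorem sum_filter_and_eq_of_imp [Fintype α] [DecidablePred P] [DecidablePred Q]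
    (h : ∀ a, x a ≠ 0 → P a → Q a) :
    ∑ a with P a ∧ Q a, x a = ∑ a with P a, x a := by
  rw [← filter_filter, sum_filter_of_ne]
  exact fun a ha hxa => h a hxa (mem_filter.1 ha).2

theorem sum_filter_and_eq_min_of_isChain [Fintype α] [DecidablePred P] [DecidablePred Q]
    (hx : 0 ≤ x) (hch : IsChain r (Function.support x))
    (hP : ∀ a b, r a b → P a → P b) (hQ : ∀ a b, r a b → Q a → Q b) :
    ∑ a with P a ∧ Q a, x a = min (∑ a with P a, x a) (∑ a with Q a, x a) := by
  refine le_antisymm (le_min (sum_filter_le_sum_filter hx fun _ => And.left)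
    (sum_filter_le_sum_filter hx fun _ => And.right)) ?_
  rcases imp_or_imp_of_isChain_support hch hP hQ with h | h
  · exact (min_le_left _ _).trans (sum_filter_and_eq_of_imp h).ge
  · rw [filter_congr fun a _ => and_comm]
    exact (min_le_right _ _).trans (sum_filter_and_eq_of_imp h).ge

theorem sum_filter_eq_min_add_of_isChain [Fintype α] [DecidablePred P] [DecidablePred Q]
    (hx : x ∈ stdSimplex ℝ α) (hch : IsChain r (Function.support x)) (hQP : ∀ a, Q a → P a)
    (hP : ∀ a b, r a b → P a → P b) (hQ : ∀ a b, r a b → ¬Q a → ¬Q b) :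
    ∑ a with P a, x a = min (∑ a with P a, x a + ∑ a with Q a, x a) 1 := by
  have hmin := sum_filter_and_eq_min_of_isChain hx.1 hch hP hQ
  have hPnQ : ∑ a with P a ∧ ¬Q a, x a = ∑ a with P a, x a - ∑ a with Q a, x a := by
    rw [eq_sub_iff_add_eq', ← sum_filter_add_sum_filter_not (univ.filter P) Q, filter_filter,
      filter_filter, filter_congr fun a _ => and_iff_right_of_imp (hQP a)]
  have hnQ : ∑ a with ¬Q a, x a = 1 - ∑ a with Q a, x a := by
    rw [eq_sub_iff_add_eq', sum_filter_add_sum_filter_not, hx.2]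
  have hQ0 : 0 ≤ ∑ a with Q a, x a := sum_nonneg fun a _ => hx.1 a
  have hP1 : ∑ a with P a, x a ≤ 1 :=
    hx.2 ▸ sum_le_sum_of_subset_of_nonneg (filter_subset _ _) fun a _ _ => hx.1 a
  -- With `m` the `x`-mass, `m P - m Q = min (m P) (1 - m Q)` forces `m Q = 0` or `m P = 1`.
  rw [hPnQ, hnQ] at hmin
  rcases min_choice (∑ a with P a, x a) (1 - ∑ a with Q a, x a) with h | h <;> rw [h] at hmin
  · rw [min_eq_left] <;> linarith
  · rw [min_eq_right] <;> linarith

end ChainSupport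

theorem sum_filter_ge_sub_filter_gt {ι : Type*} [LinearOrder ι] (g : Finset ι → ℝ) (s : Finset ι) :
    ∑ j ∈ s, (g (s.filter (j ≤ ·)) - g (s.filter (j < ·))) = g s - g ∅ := by
  induction s using Finset.induction_on_min with
  | empty => simp
  | insert m s hm ih =>
    have hms : m ∉ s := fun h => lt_irrefl m (hm m h)
    have hge : (insert m s).filter (m ≤ ·) = insert m s :=
      filter_true_of_mem fun c hc => (mem_insert.1 hc).elim ge_of_eq fun h => (hm c h).le
    have hgt : (insert m s).filter (m < ·) = s := by
      rw [filter_insert, if_neg (lt_irrefl m), filter_true_of_mem hm]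
    have hrest : ∀ j ∈ s, g ((insert m s).filter (j ≤ ·)) - g ((insert m s).filter (j < ·)) =
        g (s.filter (j ≤ ·)) - g (s.filter (j < ·)) := fun j hj => by
      rw [filter_insert, filter_insert, if_neg (hm j hj).not_ge, if_neg (hm j hj).not_gt]
    rw [sum_insert hms, hge, hgt, sum_congr rfl hrest, ih]
    ring

theorem sum_filter_le_sub_filter_lt {ι : Type*} [LinearOrder ι] (g : Finset ι → ℝ) (s : Finset ι) :
    ∑ j ∈ s, (g (s.filter (· ≤ j)) - g (s.filter (· < j))) = g s - g ∅ :=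
  sum_filter_ge_sub_filter_gt (ι := ιᵒᵈ) g s

/-- The length of `[a', a] ∩ [b', b]`. -/
noncomputable def intervalOverlap (a' a b' b : ℝ) : ℝ := max (min a b - max a' b') 0

theorem intervalOverlap_nonneg (a' a b' b : ℝ) : 0 ≤ intervalOverlap a' a b' b :=
  le_max_right _ _

theorem lt_of_intervalOverlap_ne_zero {a' a b' b : ℝ} (h : intervalOverlap a' a b' b ≠ 0) :
    a' < b ∧ b' < a := by
  by_contra! hle
  refine h (max_eq_right ?_)
  rcases le_or_gt b a' with hb | hb
  · linarith [min_le_right a b, le_max_left a' b']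
  · linarith [min_le_left a b, le_max_right a' b', hle hb]

theorem intervalOverlap_eq {a' a b' b : ℝ} (ha : a' ≤ a) (hb : b' ≤ b) :
    intervalOverlap a' a b' b = min a b - min a' b - min a b' + min a' b' := by
  simp only [intervalOverlap, min_def, max_def]
  split_ifs <;> linarith

theorem min_two_mul_sub_add_min_two_mul_sub {s u v : ℝ} (hv : 0 ≤ v)
    (hsum : s + v + u = 1) :
    (min (2 * (v + s)) 1 - min (2 * s) 1) + (min (2 * (v + u)) 1 - min (2 * u) 1) = 2 * v := by
  simp only [min_def]
  split_ifs <;> linarith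

noncomputable def clampedMass {ι : Type*} [Fintype ι] (y : ι → ℝ) (σ : ι → Prop)
    [DecidablePred σ] : ℝ :=
  min (2 * ∑ c with σ c, y c) 1

theorem clampedMass_mono {ι : Type*} [Fintype ι] {y : ι → ℝ} (hy : 0 ≤ y) {σ τ : ι → Prop}
    [DecidablePred σ] [DecidablePred τ] (h : ∀ c, σ c → τ c) :
    clampedMass y σ ≤ clampedMass y τ :=
  min_le_min_right 1 (mul_le_mul_of_nonneg_left (sum_filter_le_sum_filter hy h) zero_le_two)

theorem clampedMass_nonneg {ι : Type*} [Fintype ι] {y : ι → ℝ} (hy : 0 ≤ y) (σ : ι → Prop)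
    [DecidablePred σ] : 0 ≤ clampedMass y σ :=
  le_min (mul_nonneg zero_le_two (sum_nonneg fun c _ => hy c)) zero_le_one

theorem clampedMass_le_one {ι : Type*} [Fintype ι] (y : ι → ℝ) (σ : ι → Prop)
    [DecidablePred σ] : clampedMass y σ ≤ 1 :=
  min_le_right _ _

/-- Sends the vertex `(i, j)` of `P_C` to the midpoint of the edge `[e_i, e_j]`. -/
noncomputable def midpointMap (x : pairPoset C → ℝ) (c : C) : ℝ :=
  (∑ p with p.val.1 = c, x p) / 2 + (∑ p with p.val.2 = c, x p) / 2

@[fun_prop]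
theorem continuous_midpointMap : Continuous (midpointMap (C := C)) := by
  unfold midpointMap; fun_prop

theorem two_mul_sum_midpointMap (x : pairPoset C → ℝ) (σ : C → Prop) [DecidablePred σ] :
    2 * ∑ c with σ c, midpointMap x c = ∑ p with σ p.val.1, x p + ∑ p with σ p.val.2, x p := by
  simp only [midpointMap, sum_add_distrib, ← sum_div, sum_fiberwise_eq_sum_filter, mem_filter,
    mem_univ, true_and]
  ring

theorem midpointMap_mem_stdSimplex {x : pairPoset C → ℝ} (hx : x ∈ stdSimplex ℝ (pairPoset C)) :
    midpointMap x ∈ stdSimplex ℝ C := by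
  have hnonneg : ∀ s : Finset (pairPoset C), 0 ≤ ∑ p ∈ s, x p := fun s =>
    sum_nonneg fun p _ => hx.1 p
  refine ⟨fun c => ?_, ?_⟩
  · unfold midpointMap
    linarith [hnonneg (univ.filter (·.val.1 = c)), hnonneg (univ.filter (·.val.2 = c))]
  · have h := two_mul_sum_midpointMap x fun _ => True
    simp only [filter_true, hx.2] at h
    linarith

theorem sum_pairPoset_eq_sum_prod {f : C × C → ℝ} (hf : ∀ p : C × C, p.2 < p.1 → f p = 0) :
    ∑ p : pairPoset C, f p.val = ∑ p : C × C, f p := by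
  rw [← sum_filter_of_ne (p := fun p : C × C => p.1 ≤ p.2) fun p _ h => not_lt.1 (h ∘ hf p)]
  exact (sum_subtype _ (by simp) f).symm

theorem sum_filter_fst_eq_sum_prod (c : C) {f : C × C → ℝ}
    (hf : ∀ p : C × C, p.2 < p.1 → f p = 0) :
    ∑ p : pairPoset C with p.val.1 = c, f p.val = ∑ j, f (c, j) := by
  rw [sum_filter, sum_pairPoset_eq_sum_prod (f := fun p => if p.1 = c then f p else 0)
    fun p hp => by rw [hf p hp, ite_self], Fintype.sum_prod_type,
    sum_eq_single c (fun b _ hb => by simp [hb]) (by simp)]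
  simp

theorem sum_filter_snd_eq_sum_prod (c : C) {f : C × C → ℝ}
    (hf : ∀ p : C × C, p.2 < p.1 → f p = 0) :
    ∑ p : pairPoset C with p.val.2 = c, f p.val = ∑ i, f (i, c) := by
  rw [sum_filter, sum_pairPoset_eq_sum_prod (f := fun p => if p.2 = c then f p else 0)
    fun p hp => by rw [hf p hp, ite_self], Fintype.sum_prod_type_right,
    sum_eq_single c (fun b _ hb => by simp [hb]) (by simp)]
  simp

theorem apply_eq_inclusion_exclusion (x : pairPoset C → ℝ) (p : pairPoset C) :
    x p = ∑ q with q.val.1 ≤ p.val.1 ∧ p.val.2 ≤ q.val.2, x q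
      - ∑ q with q.val.1 < p.val.1 ∧ p.val.2 ≤ q.val.2, x q
      - ∑ q with q.val.1 ≤ p.val.1 ∧ p.val.2 < q.val.2, x q
      + ∑ q with q.val.1 < p.val.1 ∧ p.val.2 < q.val.2, x q := by
  classical
  have key : ∀ (a b i j : C) (t : ℝ), (if a = i ∧ b = j then t else 0) =
      (if a ≤ i ∧ j ≤ b then t else 0) - (if a < i ∧ j ≤ b then t else 0)
        - (if a ≤ i ∧ j < b then t else 0) + (if a < i ∧ j < b then t else 0) := by
    intro a b i j t
    rcases lt_trichotomy a i with h1 | rfl | h1 <;> rcases lt_trichotomy j b with h2 | rfl | h2 <;>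
      simp [*, le_of_lt, ne_of_gt, not_le_of_gt, ne_of_lt]
  simp only [sum_filter, ← sum_sub_distrib, ← sum_add_distrib]
  rw [← Fintype.sum_ite_eq p x]
  refine sum_congr rfl fun q _ => ?_
  have hpq : p = q ↔ q.val.1 = p.val.1 ∧ q.val.2 = p.val.2 :=
    ⟨fun h => h ▸ ⟨rfl, rfl⟩, fun h => (Subtype.ext (Prod.ext h.1 h.2) : q = p).symm⟩
  rw [if_congr hpq rfl rfl, key]

/-- For `t ∈ [0, 1]` let the `t`-quantile interval of `y` run from the left to the right
`t/2`-quantile of `y`; `quantileMap y (i, j)` is the length of the set of `t` whose quantile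
interval is `[i, j]`. -/
noncomputable def quantileMap (y : C → ℝ) (p : C × C) : ℝ :=
  intervalOverlap (clampedMass y (· < p.1)) (clampedMass y (· ≤ p.1))
    (clampedMass y (p.2 < ·)) (clampedMass y (p.2 ≤ ·))

@[fun_prop]
theorem continuous_quantileMap (p : C × C) : Continuous fun y : C → ℝ => quantileMap y p := by
  unfold quantileMap intervalOverlap clampedMass; fun_prop

section Quantile

variable {y : C → ℝ}

theorem quantileMap_eq (hy : 0 ≤ y) (i j : C) :
    quantileMap y (i, j) =
      min (clampedMass y (· ≤ i)) (clampedMass y (j ≤ ·))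
        - min (clampedMass y (· < i)) (clampedMass y (j ≤ ·))
        - min (clampedMass y (· ≤ i)) (clampedMass y (j < ·))
        + min (clampedMass y (· < i)) (clampedMass y (j < ·)) :=
  intervalOverlap_eq (clampedMass_mono hy fun _ => le_of_lt) (clampedMass_mono hy fun _ => le_of_lt)

theorem quantileMap_eq_zero_of_lt (hy : y ∈ stdSimplex ℝ C) {p : C × C} (hp : p.2 < p.1) :
    quantileMap y p = 0 := by
  by_contra h
  obtain ⟨h₁, h₂⟩ := lt_of_intervalOverlap_ne_zero h
  have hcover : 1 ≤ ∑ c with c < p.1, y c + ∑ c with p.2 < c, y c := by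
    have hsplit := sum_filter_add_sum_filter_not univ (· < p.1) y
    have hle := sum_filter_le_sum_filter hy.1 fun c (hc : ¬c < p.1) => hp.trans_le (not_lt.1 hc)
    linarith [hy.2]
  rcases le_total 1 (2 * ∑ c with c < p.1, y c) with h | h
  · rw [clampedMass, min_eq_right h] at h₁
    linarith [clampedMass_le_one y (p.2 ≤ ·)]
  · rw [clampedMass, min_eq_right (by linarith)] at h₂
    linarith [clampedMass_le_one y (· ≤ p.1)]

theorem quantileMap_eq_zero_of_lt_of_lt (hy : 0 ≤ y) {p q : C × C} (h₁ : p.1 < q.1)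
    (h₂ : p.2 < q.2) (hp : quantileMap y p ≠ 0) : quantileMap y q = 0 := by
  by_contra hq
  obtain ⟨-, hp₂⟩ := lt_of_intervalOverlap_ne_zero hp
  obtain ⟨hq₁, -⟩ := lt_of_intervalOverlap_ne_zero hq
  have hA := clampedMass_mono hy fun c (hc : c ≤ p.1) => hc.trans_lt h₁
  have hB := clampedMass_mono hy fun c (hc : q.2 ≤ c) => h₂.trans_le hc
  linarith

theorem sum_min_clampedMass_ge_sub_gt (hy : ∑ c, y c = 1) {t : ℝ} (ht₀ : 0 ≤ t) (ht₁ : t ≤ 1) :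
    ∑ j, (min t (clampedMass y (j ≤ ·)) - min t (clampedMass y (j < ·))) = t := by
  have h := sum_filter_ge_sub_filter_gt (fun s => min t (min (2 * ∑ c ∈ s, y c) 1)) univ
  rwa [hy, sum_empty, mul_one, mul_zero, min_eq_right one_le_two, min_eq_left zero_le_one,
    min_eq_left ht₁, min_eq_right ht₀, sub_zero] at h

theorem sum_min_clampedMass_le_sub_lt (hy : ∑ c, y c = 1) {t : ℝ} (ht₀ : 0 ≤ t) (ht₁ : t ≤ 1) :
    ∑ i, (min t (clampedMass y (· ≤ i)) - min t (clampedMass y (· < i))) = t := by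
  have h := sum_filter_le_sub_filter_lt (fun s => min t (min (2 * ∑ c ∈ s, y c) 1)) univ
  rwa [hy, sum_empty, mul_one, mul_zero, min_eq_right one_le_two, min_eq_left zero_le_one,
    min_eq_left ht₁, min_eq_right ht₀, sub_zero] at h

theorem sum_quantileMap_fst (hy : y ∈ stdSimplex ℝ C) (i : C) :
    ∑ j, quantileMap y (i, j) = clampedMass y (· ≤ i) - clampedMass y (· < i) := by
  set A := clampedMass y (· ≤ i)
  set A' := clampedMass y (· < i)
  calc ∑ j, quantileMap y (i, j)
      = ∑ j, ((min A (clampedMass y (j ≤ ·)) - min A (clampedMass y (j < ·)))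
          - (min A' (clampedMass y (j ≤ ·)) - min A' (clampedMass y (j < ·)))) :=
        sum_congr rfl fun j _ => by rw [quantileMap_eq hy.1]; ring
    _ = A - A' := by
        rw [sum_sub_distrib, sum_min_clampedMass_ge_sub_gt hy.2 (clampedMass_nonneg hy.1 _)
          (min_le_right _ _), sum_min_clampedMass_ge_sub_gt hy.2 (clampedMass_nonneg hy.1 _)
          (min_le_right _ _)]

theorem sum_quantileMap_snd (hy : y ∈ stdSimplex ℝ C) (j : C) :
    ∑ i, quantileMap y (i, j) = clampedMass y (j ≤ ·) - clampedMass y (j < ·) := by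
  set B := clampedMass y (j ≤ ·)
  set B' := clampedMass y (j < ·)
  calc ∑ i, quantileMap y (i, j)
      = ∑ i, ((min B (clampedMass y (· ≤ i)) - min B (clampedMass y (· < i)))
          - (min B' (clampedMass y (· ≤ i)) - min B' (clampedMass y (· < i)))) :=
        sum_congr rfl fun i _ => by
          rw [quantileMap_eq hy.1, min_comm B, min_comm B, min_comm B', min_comm B']; ring
    _ = B - B' := by
        rw [sum_sub_distrib, sum_min_clampedMass_le_sub_lt hy.2 (clampedMass_nonneg hy.1 _)
          (min_le_right _ _), sum_min_clampedMass_le_sub_lt hy.2 (clampedMass_nonneg hy.1 _)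
          (min_le_right _ _)]

theorem sum_quantileMap (hy : y ∈ stdSimplex ℝ C) : ∑ p, quantileMap y p = 1 := by
  rw [Fintype.sum_prod_type]
  simp only [sum_quantileMap_fst hy]
  simpa [min_eq_right (clampedMass_le_one y _)] using
    sum_min_clampedMass_le_sub_lt hy.2 zero_le_one le_rfl

theorem quantileMap_val_mem_pairRealization (hy : y ∈ stdSimplex ℝ C) :
    (fun p : pairPoset C => quantileMap y p.val) ∈ pairRealization C := by
  refine ⟨⟨fun p => intervalOverlap_nonneg _ _ _ _, ?_⟩, ?_⟩
  · rw [sum_pairPoset_eq_sum_prod fun _ => quantileMap_eq_zero_of_lt hy, sum_quantileMap hy]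
  · intro p hp q hq _
    by_contra! hpq
    simp only [pairLE, not_and_or, not_le] at hpq
    obtain ⟨h₁ | h₁, h₂ | h₂⟩ := hpq
    · exact lt_asymm h₁ h₂
    · exact hq (quantileMap_eq_zero_of_lt_of_lt hy.1 h₁ h₂ hp)
    · exact hp (quantileMap_eq_zero_of_lt_of_lt hy.1 h₂ h₁ hq)
    · exact lt_asymm h₁ h₂

theorem midpointMap_quantileMap_val (hy : y ∈ stdSimplex ℝ C) :
    midpointMap (fun p : pairPoset C => quantileMap y p.val) = y := by
  funext c
  have hle : ∑ c' with c' ≤ c, y c' = y c + ∑ c' with c' < c, y c' := by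
    rw [← sum_insert (s := univ.filter (· < c)) (by simp)]
    congr 1; ext; simp [le_iff_lt_or_eq, or_comm]
  have hge : ∑ c' with c ≤ c', y c' = y c + ∑ c' with c < c', y c' := by
    rw [← sum_insert (s := univ.filter (c < ·)) (by simp)]
    congr 1; ext; simp [le_iff_lt_or_eq, eq_comm, or_comm]
  have htotal : ∑ c' with c' < c, y c' + ∑ c' with c ≤ c', y c' = 1 := by
    simpa only [not_lt, hy.2] using sum_filter_add_sum_filter_not univ (· < c) y
  have h := min_two_mul_sub_add_min_two_mul_sub (hy.1 c)
    (by linarith : ∑ c' with c' < c, y c' + y c + ∑ c' with c < c', y c' = 1)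
  rw [midpointMap, sum_filter_fst_eq_sum_prod _ fun _ => quantileMap_eq_zero_of_lt hy,
    sum_filter_snd_eq_sum_prod _ fun _ => quantileMap_eq_zero_of_lt hy,
    sum_quantileMap_fst hy, sum_quantileMap_snd hy]
  simp only [clampedMass, hle, hge]
  linarith

end Quantile

section Realization

variable {x : pairPoset C → ℝ}

theorem sum_filter_fst_eq_clampedMass (hx : x ∈ pairRealization C) (σ : C → Prop)
    [DecidablePred σ] (hσ : ∀ c c', c ≤ c' → σ c' → σ c) :
    ∑ p with σ p.val.1, x p = clampedMass (midpointMap x) σ := by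
  rw [clampedMass, two_mul_sum_midpointMap]
  exact sum_filter_eq_min_add_of_isChain hx.1 hx.2 (fun p => hσ _ _ p.2)
    (fun _ _ hpq => hσ _ _ hpq.1) fun _ _ hpq hp hq => hp (hσ _ _ hpq.2 hq)

theorem sum_filter_snd_eq_clampedMass (hx : x ∈ pairRealization C) (σ : C → Prop)
    [DecidablePred σ] (hσ : ∀ c c', c ≤ c' → σ c → σ c') :
    ∑ p with σ p.val.2, x p = clampedMass (midpointMap x) σ := by
  rw [clampedMass, two_mul_sum_midpointMap, add_comm]
  exact sum_filter_eq_min_add_of_isChain hx.1 hx.2 (fun p => hσ _ _ p.2)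
    (fun _ _ hpq => hσ _ _ hpq.2) fun _ _ hpq hp hq => hp (hσ _ _ hpq.1 hq)

theorem sum_filter_fst_and_snd_eq_min (hx : x ∈ pairRealization C) (σ τ : C → Prop)
    [DecidablePred σ] [DecidablePred τ] (hσ : ∀ c c', c ≤ c' → σ c' → σ c)
    (hτ : ∀ c c', c ≤ c' → τ c → τ c') :
    ∑ p with σ p.val.1 ∧ τ p.val.2, x p =
      min (clampedMass (midpointMap x) σ) (clampedMass (midpointMap x) τ) := by
  rw [sum_filter_and_eq_min_of_isChain hx.1.1 hx.2 (fun _ _ hpq => hσ _ _ hpq.1)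
    (fun _ _ hpq => hτ _ _ hpq.2), sum_filter_fst_eq_clampedMass hx σ hσ,
    sum_filter_snd_eq_clampedMass hx τ hτ]

theorem quantileMap_midpointMap_val (hx : x ∈ pairRealization C) :
    (fun p : pairPoset C => quantileMap (midpointMap x) p.val) = x := by
  funext p
  rw [apply_eq_inclusion_exclusion x p, quantileMap_eq (midpointMap_mem_stdSimplex hx.1).1,
    sum_filter_fst_and_snd_eq_min hx _ _ (fun _ _ h => h.trans) (fun _ _ h h' => h'.trans h),
    sum_filter_fst_and_snd_eq_min hx _ _ (fun _ _ h => h.trans_lt) (fun _ _ h h' => h'.trans h),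
    sum_filter_fst_and_snd_eq_min hx _ _ (fun _ _ h => h.trans) (fun _ _ h h' => h'.trans_le h),
    sum_filter_fst_and_snd_eq_min hx _ _ (fun _ _ h => h.trans_lt)
      (fun _ _ h h' => h'.trans_le h)]

end Realization

noncomputable def midpointHomeomorph : pairRealization C ≃ₜ stdSimplex ℝ C where
  toFun x := ⟨midpointMap x, midpointMap_mem_stdSimplex x.2.1⟩
  invFun y := ⟨fun p => quantileMap y p.val, quantileMap_val_mem_pairRealization y.2⟩
  left_inv x := Subtype.ext (quantileMap_midpointMap_val x.2)
  right_inv y := Subtype.ext (midpointMap_quantileMap_val y.2)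

theorem pairRealization_homeo_stdSimplex_general (C : Type*) [Fintype C] [LinearOrder C] :
    ∃ h : pairRealization C ≃ₜ stdSimplex ℝ C,
      ∀ (x : pairRealization C) (c : C),
        (h x : C → ℝ) c =
          (∑ p : pairPoset C, if p.val.1 = c then (x : pairPoset C → ℝ) p else 0) / 2 +
          (∑ p : pairPoset C, if p.val.2 = c then (x : pairPoset C → ℝ) p else 0) / 2 :=
  ⟨midpointHomeomorph, fun x c => by simp only [← sum_filter]; rfl⟩

/-- The canonical map `F(x)(c) = ½ Σ_{(i,j) : i = c} x(i,j) + ½ Σ_{(i,j) : j = c} x(i,j)`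
is a homeomorphism from the realized order complex `|P_C|` onto the full standard
simplex on `C`. -/
theorem pairRealization_homeo_stdSimplex (C : Type*) [Fintype C] [LinearOrder C]
    [Nonempty C] :
    ∃ h : pairRealization C ≃ₜ stdSimplex ℝ C,
      ∀ (x : pairRealization C) (c : C),
        (h x : C → ℝ) c =
          (∑ p : pairPoset C, if p.val.1 = c then (x : pairPoset C → ℝ) p else 0) / 2 +
          (∑ p : pairPoset C, if p.val.2 = c then (x : pairPoset C → ℝ) p else 0) / 2 :=
  pairRealization_homeo_stdSimplex_general C
end

section
/- Let Q be a finite poset, let P ⊆ Q be a subset with the induced order, and let φ : Q → P be a monotone map such that φ(p) = p for all p ∈ P and φ(q) ≤ q for all q ∈ Q. Let |Q| ⊆ stdSimplex(ℝ, Q) be the realized order complex of Q (points with chain support), and identify |P| with the subset of |Q| consisting of points supported on chains contained in P. Then the induced map |φ| : |Q| → |Q| given by |φ|(x)(q') = Σ_{q ∈ Q, φ(q) = q'} x(q) is a well-defined continuous map with image contained in |P|, fixing |P| pointwise, and there is a homotopy H : |Q| × [0,1] → |Q| with H(·,0) = id, H(·,1) = |φ|, and H(x,t) = x for all x ∈ |P|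 and all t; that is, |φ| is a strong deformation retraction of |Q| onto |P|. -/
open Finset

/-- The geometric realization of the order complex of a finite poset `Q`: points of the
standard simplex on the vertex set `Q` whose support is a chain. -/
def orderRealization (Q : Type*) [Fintype Q] [PartialOrder Q] : Set (Q → ℝ) :=
  {x | x ∈ stdSimplex ℝ Q ∧ IsChain (· ≤ ·) (Function.support x)}

/-- The subcomplex of `orderRealization Q` consisting of points supported on chains
contained in the subset `P`. -/
def orderRealizationOn (Q : Type*) [Fintype Q] [PartialOrder Q] (P : Set Q) :
    Set (Q → ℝ) :=
  {x | x ∈ orderRealization Q ∧ Function.support x ⊆ P}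

/-- The map induced on realizations by a map of posets `φ : Q → Q`:
`|φ|(x)(q') = Σ_{q : φ(q) = q'} x(q)`. -/
def inducedMap {Q : Type*} [Fintype Q] [DecidableEq Q] (φ : Q → Q) (x : Q → ℝ) :
    Q → ℝ :=
  fun q' => ∑ q : Q, if φ q = q' then x q else 0

/-! Write a point `x` of `|Q|` as weights on a chain `q₁ < ⋯ < qₖ` and lay these weights end to
end along `[0, 1]`. At time `t`, the part of each weight lying below `t` has been moved from `qᵢ`
to `φ qᵢ`. The support at time `t` is then contained in `{qᵢ, …, qₖ} ∪ φ '' {q₁, …, qᵢ}` for some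
`i`, a chain because `φ` is monotone and `φ qⱼ ≤ qⱼ ≤ qₗ` for `j ≤ i ≤ l`. At `t = 1` all the mass
has moved, which gives `|φ|`, and points supported in `P` never move because `φ` fixes `P`. -/

namespace OrderRealization

variable {Q : Type*} [Fintype Q]

section InducedMap

variable [DecidableEq Q] (φ : Q → Q)

lemma inducedMap_apply (y : Q → ℝ) (q' : Q) :
    inducedMap φ y q' = ∑ q with φ q = q', y q := by
  rw [inducedMap, Finset.sum_filter]

lemma inducedMap_nonneg {y : Q → ℝ} (hy : ∀ q, 0 ≤ y q) (q' : Q) : 0 ≤ inducedMap φ y q' := by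
  rw [inducedMap_apply]
  exact Finset.sum_nonneg fun q _ => hy q

lemma sum_inducedMap (y : Q → ℝ) : ∑ q', inducedMap φ y q' = ∑ q, y q := by
  simp only [inducedMap_apply]
  exact Finset.sum_fiberwise _ _ _

lemma support_inducedMap_subset (y : Q → ℝ) :
    Function.support (inducedMap φ y) ⊆ φ '' Function.support y := by
  intro q' hq'
  rw [Function.mem_support, inducedMap_apply] at hq'
  obtain ⟨q, hq, hyq⟩ := Finset.exists_ne_zero_of_sum_ne_zero hq'
  exact ⟨q, hyq, (Finset.mem_filter.1 hq).2⟩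

lemma inducedMap_eq_self {y : Q → ℝ} (hfix : ∀ q ∈ Function.support y, φ q = q) :
    inducedMap φ y = y := by
  funext q'
  have hterm : ∀ q, (if φ q = q' then y q else 0) = if q = q' then y q else 0 := by
    intro q
    by_cases hq : y q = 0
    · simp [hq]
    · rw [hfix q hq]
  simp only [inducedMap, hterm, Finset.sum_ite_eq', Finset.mem_univ, if_true]

lemma mem_stdSimplex_inducedMap {y : Q → ℝ} (hy : y ∈ stdSimplex ℝ Q) :
    inducedMap φ y ∈ stdSimplex ℝ Q :=
  ⟨inducedMap_nonneg φ hy.1, (sum_inducedMap φ y).trans hy.2⟩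

lemma continuous_inducedMap : Continuous (inducedMap φ) := by
  refine continuous_pi fun q' => ?_
  simp only [inducedMap_apply]
  fun_prop

end InducedMap

lemma isChain_union_image {α : Type*} [Preorder α] {A B : Set α} {f : α → α}
    (hA : IsChain (· ≤ ·) A) (hB : IsChain (· ≤ ·) B) (hf : Monotone f)
    (hBA : ∀ b ∈ B, ∀ a ∈ A, f b ≤ a) : IsChain (· ≤ ·) (A ∪ f '' B) := by
  refine isChain_union.2 ⟨hA, hf.isChain_image hB, ?_⟩
  rintro a ha _ ⟨b, hb, rfl⟩ -
  exact Or.inr (hBA b hb a ha)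

variable [PartialOrder Q]

lemma inducedMap_mem_orderRealizationOn [DecidableEq Q] {P : Set Q} {φ : Q → Q}
    (hφP : ∀ q, φ q ∈ P) (hmono : Monotone φ) {x : Q → ℝ} (hx : x ∈ orderRealization Q) :
    inducedMap φ x ∈ orderRealizationOn Q P := by
  have hsupp := support_inducedMap_subset φ x
  refine ⟨⟨mem_stdSimplex_inducedMap φ hx.1, (hmono.isChain_image hx.2).mono hsupp⟩, ?_⟩
  rintro _ hq'
  obtain ⟨q, -, rfl⟩ := hsupp hq'
  exact hφP q

section Sweep

variable {x : Q → ℝ}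

noncomputable def massBelow (x : Q → ℝ) (q : Q) : ℝ :=
  ∑ p, (Set.Iio q).indicator x p

/-- On a chain, `x q` occupies `[massBelow x q, massBelow x q + x q]` of `[0, 1]`; this is the
length of the part of that interval below `t`. -/
noncomputable def sweptMass (x : Q → ℝ) (t : ℝ) (q : Q) : ℝ :=
  min (massBelow x q + x q) t - min (massBelow x q) t

lemma massBelow_add_self (x : Q → ℝ) (q : Q) :
    massBelow x q + x q = ∑ p, (Set.Iic q).indicator x p := by
  classical
  rw [massBelow, ← Set.Iio_union_right, Set.indicator_union_of_disjoint (by simp),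
    Finset.sum_add_distrib]
  simp [Set.indicator_apply]

lemma sweptMass_eq_zero {t : ℝ} {q : Q} (hq : x q = 0) : sweptMass x t q = 0 := by
  simp [sweptMass, hq]

lemma support_sweptMass_subset (t : ℝ) :
    Function.support (sweptMass x t) ⊆ Function.support x :=
  fun _ hq hxq => hq (sweptMass_eq_zero hxq)

lemma support_sub_sweptMass_subset (t : ℝ) :
    Function.support (x - sweptMass x t) ⊆ Function.support x :=
  fun _ hq hxq => hq (by simp [hxq, sweptMass_eq_zero hxq])

lemma continuous_massBelow (q : Q) : Continuous fun x : Q → ℝ => massBelow x q := by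
  refine continuous_finsetSum _ fun p _ => ?_
  by_cases hp : p < q
  · simpa [Set.indicator_of_mem, hp] using continuous_apply p
  · simpa [Set.indicator_of_notMem, hp] using continuous_const

lemma continuous_sweptMass :
    Continuous fun xt : (Q → ℝ) × ℝ => sweptMass xt.1 xt.2 := by
  refine continuous_pi fun q => ?_
  have hmass : Continuous fun xt : (Q → ℝ) × ℝ => massBelow xt.1 q :=
    (continuous_massBelow q).comp continuous_fst
  have hxq : Continuous fun xt : (Q → ℝ) × ℝ => xt.1 q :=
    (continuous_apply q).comp continuous_fst
  exact ((hmass.add hxq).min continuous_snd).sub (hmass.min continuous_snd)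

section Nonneg

variable (hx0 : ∀ q, 0 ≤ x q)
include hx0

lemma massBelow_nonneg (q : Q) : 0 ≤ massBelow x q :=
  Finset.sum_nonneg fun p _ => Set.indicator_nonneg (fun p _ => hx0 p) p

lemma massBelow_add_self_le_one (hsum : ∑ q, x q = 1) (q : Q) : massBelow x q + x q ≤ 1 := by
  rw [massBelow_add_self, ← hsum]
  exact Finset.sum_le_sum fun p _ => Set.indicator_le_self' (fun p _ => hx0 p) p

lemma massBelow_add_self_le_of_lt {a b : Q} (hab : a < b) :
    massBelow x a + x a ≤ massBelow x b := by
  rw [massBelow_add_self]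
  exact Finset.sum_le_sum fun p _ =>
    Set.indicator_le_indicator_of_subset (fun p hp => lt_of_le_of_lt hp hab) hx0 p

lemma sweptMass_nonneg (t : ℝ) (q : Q) : 0 ≤ sweptMass x t q :=
  sub_nonneg.2 (min_le_min_right t (le_add_of_nonneg_right (hx0 q)))

lemma sweptMass_le (t : ℝ) (q : Q) : sweptMass x t q ≤ x q := by
  have : min (massBelow x q + x q) t ≤ min (massBelow x q) t + x q := by
    rw [← min_add_add_right]
    exact min_le_min_left _ (le_add_of_nonneg_right (hx0 q))
  rw [sweptMass]
  linarith

lemma sweptMass_zero : sweptMass x 0 = 0 := by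
  funext q
  simp [sweptMass, massBelow_nonneg hx0 q, add_nonneg (massBelow_nonneg hx0 q) (hx0 q)]

lemma sweptMass_one (hsum : ∑ q, x q = 1) : sweptMass x 1 = x := by
  funext q
  have hle := massBelow_add_self_le_one hx0 hsum q
  simp [sweptMass, hle, (le_add_of_nonneg_right (hx0 q)).trans hle]

lemma massBelow_lt_of_sweptMass_ne_zero {t : ℝ} {q : Q} (h : sweptMass x t q ≠ 0) :
    massBelow x q < t := by
  by_contra! ht
  exact h (by simp [sweptMass, ht, ht.trans (le_add_of_nonneg_right (hx0 q))])

lemma lt_massBelow_add_self_of_sub_sweptMass_ne_zero {t : ℝ} {q : Q}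
    (h : x q - sweptMass x t q ≠ 0) : t < massBelow x q + x q := by
  by_contra! ht
  have ht' : massBelow x q ≤ t := (le_add_of_nonneg_right (hx0 q)).trans ht
  exact h (by simp [sweptMass, ht, ht'])

lemma le_of_mem_support_sweptMass (hchain : IsChain (· ≤ ·) (Function.support x)) {t : ℝ}
    {a b : Q} (ha : a ∈ Function.support (sweptMass x t))
    (hb : b ∈ Function.support (x - sweptMass x t)) : a ≤ b := by
  rcases eq_or_ne a b with rfl | hab
  · exact le_rfl
  refine (hchain (support_sweptMass_subset t ha) (support_sub_sweptMass_subset t hb)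
    hab).resolve_right fun hba => ?_
  -- the interval of `b` would end before that of `a` begins
  have h₁ := massBelow_lt_of_sweptMass_ne_zero hx0 ha
  have h₂ := lt_massBelow_add_self_of_sub_sweptMass_ne_zero hx0 hb
  have h₃ := massBelow_add_self_le_of_lt hx0 (lt_of_le_of_ne hba (Ne.symm hab))
  linarith

end Nonneg

variable [DecidableEq Q]

noncomputable def sweep (φ : Q → Q) (x : Q → ℝ) (t : ℝ) : Q → ℝ :=
  x - sweptMass x t + inducedMap φ (sweptMass x t)

variable (φ : Q → Q)

lemma sweep_mem_orderRealization (hmono : Monotone φ) (hle : ∀ q, φ q ≤ q)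
    (hx : x ∈ orderRealization Q) (t : ℝ) : sweep φ x t ∈ orderRealization Q := by
  obtain ⟨⟨hx0, hsum⟩, hchain⟩ := hx
  refine ⟨⟨fun q => ?_, ?_⟩, ?_⟩
  · exact add_nonneg (sub_nonneg.2 (sweptMass_le hx0 t q))
      (inducedMap_nonneg φ (sweptMass_nonneg hx0 t) q)
  · simp only [sweep, Pi.add_apply, Pi.sub_apply, Finset.sum_add_distrib, Finset.sum_sub_distrib,
      sum_inducedMap, hsum, sub_add_cancel]
  · refine IsChain.mono ((Function.support_add _ _).trans
      (Set.union_subset_union_right _ (support_inducedMap_subset φ _))) ?_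
    exact isChain_union_image (hchain.mono (support_sub_sweptMass_subset t))
      (hchain.mono (support_sweptMass_subset t)) hmono fun b hb a ha =>
      (hle b).trans (le_of_mem_support_sweptMass hx0 hchain hb ha)

lemma sweep_zero (hx0 : ∀ q, 0 ≤ x q) : sweep φ x 0 = x := by
  funext q
  simp [sweep, sweptMass_zero hx0, inducedMap]

lemma sweep_one (hx : x ∈ stdSimplex ℝ Q) : sweep φ x 1 = inducedMap φ x := by
  simp [sweep, sweptMass_one hx.1 hx.2]

lemma sweep_eq_self {P : Set Q} (hfix : ∀ p ∈ P, φ p = p) (hxP : Function.support x ⊆ P)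
    (t : ℝ) : sweep φ x t = x := by
  rw [sweep, inducedMap_eq_self φ fun q hq => hfix q (hxP (support_sweptMass_subset t hq)),
    sub_add_cancel]

lemma continuous_sweep : Continuous fun xt : (Q → ℝ) × ℝ => sweep φ xt.1 xt.2 :=
  ((continuous_fst (X := Q → ℝ) (Y := ℝ)).sub continuous_sweptMass).add
    ((continuous_inducedMap φ).comp continuous_sweptMass)

end Sweep

end OrderRealization

open OrderRealization in
/-- If `φ : Q → Q` is a monotone retraction of the finite poset `Q` onto a subset `P`
with `φ(q) ≤ q` for all `q`, then the induced map `|φ|` maps `|Q|` into `|P|`, and it is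
a strong deformation retraction of `|Q|` onto `|P|`: there is a homotopy `H` from the
identity to `|φ|` fixing `|P|` pointwise throughout. -/
theorem orderRealization_strong_deformation_retract (Q : Type*) [Fintype Q]
    [PartialOrder Q] [DecidableEq Q] (P : Set Q) (φ : Q → Q)
    (hφP : ∀ q, φ q ∈ P)
    (hmono : Monotone φ)
    (hfix : ∀ p ∈ P, φ p = p)
    (hle : ∀ q, φ q ≤ q) :
    (∀ x ∈ orderRealization Q, inducedMap φ x ∈ orderRealizationOn Q P) ∧
    ∃ H : C(↥(orderRealization Q) × unitInterval, ↥(orderRealization Q)),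
      (∀ x, H (x, 0) = x) ∧
      (∀ (x : ↥(orderRealization Q)) (q' : Q),
        ((H (x, 1) : Q → ℝ) q') = inducedMap φ (x : Q → ℝ) q') ∧
      (∀ x : ↥(orderRealization Q), (x : Q → ℝ) ∈ orderRealizationOn Q P →
        ∀ t : unitInterval, H (x, t) = x) := by
  refine ⟨fun x hx => inducedMap_mem_orderRealizationOn hφP hmono hx, ?_⟩
  let H : C(↥(orderRealization Q) × unitInterval, ↥(orderRealization Q)) :=
    { toFun := fun xt => ⟨sweep φ xt.1 xt.2, sweep_mem_orderRealization φ hmono hle xt.1.2 _⟩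
      continuous_toFun := ((continuous_sweep φ).comp
        ((continuous_subtype_val.comp continuous_fst).prodMk
          (continuous_subtype_val.comp continuous_snd))).subtype_mk _ }
  refine ⟨H, fun x => Subtype.ext (sweep_zero φ x.2.1.1), fun x q' => ?_,
    fun x hxP t => Subtype.ext (sweep_eq_self φ hfix hxP.2 t)⟩
  exact congrFun (sweep_one φ x.2.1) q'
end

section
/- Let r = 2 with generators x, y, and let w = [x,y] = x y x^{−1} y^{−1} ∈ F_2. Then for every n ≥ 1, Tr_{[x,y]}(n) = ∫_{U(n)^2} tr(A B A^{−1} B^{−1}) dμ_n(A) dμ_n(B) = 1/n. -/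
open MeasureTheory
open scoped commutatorElement

/-!
The twirl `T(M) = ∫ U M U⁻¹ dμ(U)` of a matrix `M` is invariant under conjugation by unitaries
(left invariance of Haar measure), so it commutes with every unitary and is therefore scalar;
comparing traces gives `T(M) = (tr M / n) • 1`. Integrating over `B` first,
`∫ tr(A B A⁻¹ B⁻¹) dB = tr(A · T(A⁻¹)) = tr A · tr A⁻¹ / n`. Finally
`tr A · tr A⁻¹ = ∑ᵢⱼ tr(Eⱼᵢ A Eᵢⱼ A⁻¹)`, so the same formula gives
`∫ tr A · tr A⁻¹ dA = ∑ᵢⱼ tr Eⱼᵢ · tr Eᵢⱼ / n = 1`.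
-/

open Matrix

section Commutant

variable {ι R : Type*} [Fintype ι] [DecidableEq ι]

lemma Matrix.trace_mul_trace_eq_sum [Semiring R] (A B : Matrix ι ι R) :
    trace A * trace B = ∑ i, ∑ j, trace (single j i 1 * A * single i j 1 * B) := by
  simp only [single_mul_mul_single, one_mul, mul_one, trace_single_mul, smul_eq_mul]
  simp [trace, Finset.sum_mul_sum]

variable [CommRing R] [StarRing R]

lemma Equiv.Perm.permMatrix_mem_unitaryGroup (σ : Equiv.Perm ι) :
    σ.permMatrix R ∈ unitaryGroup ι R := by
  rw [mem_unitaryGroup_iff', star_eq_conjTranspose, conjTranspose_permMatrix, ← permMatrix_mul,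
    mul_inv_cancel, permMatrix_one]

lemma Matrix.diagonal_mem_unitaryGroup {d : ι → R} (hd : star d * d = 1) :
    diagonal d ∈ unitaryGroup ι R := by
  rw [mem_unitaryGroup_iff', star_eq_conjTranspose, diagonal_conjTranspose, diagonal_mul_diagonal]
  exact congrArg diagonal hd

lemma Matrix.commute_single_of_forall_commute_unitary [Invertible (2 : R)] {M : Matrix ι ι R}
    (hM : ∀ U ∈ unitaryGroup ι R, Commute U M) (i j : ι) : Commute (single i j 1) M := by
  -- `E_kk = (1 - R_k) / 2` for the reflection `R_k`, and `E_ij = E_ii P E_jj` for the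
  -- transposition matrix `P` of `i` and `j`.
  have hdiag (k : ι) : Commute (single k k 1) M := by
    have hrefl : diagonal (Function.update 1 k (-1)) ∈ unitaryGroup ι R :=
      diagonal_mem_unitaryGroup <| by
        ext l; rcases eq_or_ne l k with rfl | hl <;> simp [Function.update_of_ne, *]
    have : single k k (1 : R) = (⅟2 : R) • (1 - diagonal (Function.update 1 k (-1))) := by
      rw [← diagonal_one', diagonal_sub, ← diagonal_smul, ← diagonal_single]
      congr 1
      ext l
      rcases eq_or_ne l k with rfl | hl <;> simp [one_add_one_eq_two, *]
    rw [this]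
    exact ((Commute.one_left M).sub_left (hM _ hrefl)).smul_left _
  have hswap : single i j (1 : R) =
      single i i 1 * (Equiv.swap i j).permMatrix R * single j j 1 := by
    simp [single_mul_mul_single]
  rw [hswap]
  exact ((hdiag i).mul_left (hM _ (Equiv.Perm.permMatrix_mem_unitaryGroup _))).mul_left (hdiag j)

lemma Matrix.mem_range_scalar_of_forall_commute_unitary [Invertible (2 : R)] {M : Matrix ι ι R}
    (hM : ∀ U ∈ unitaryGroup ι R, Commute U M) : M ∈ Set.range (scalar ι) :=
  mem_range_scalar_of_commute_single fun i j _ => commute_single_of_forall_commute_unitary hM i j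

end Commutant

lemma isCompact_unitary {E : Type*} [NormedRing E] [StarRing E] [CStarRing E] [ProperSpace E] :
    IsCompact (unitary E : Set E) :=
  Metric.isCompact_of_isClosed_isBounded isClosed_unitary <|
    isBounded_iff_forall_norm_le.2 ⟨‖(1 : E)‖, fun U hU => by
      rw [← CStarRing.norm_mul_mem_unitary 1 hU, one_mul]⟩

lemma Continuous.integrable_of_compactSpace {X E : Type*} [TopologicalSpace X] [CompactSpace X]
    [MeasurableSpace X] [OpensMeasurableSpace X] [NormedAddCommGroup E] {μ : Measure X}
    [IsFiniteMeasure μ] {f : X → E} (hf : Continuous f) : Integrable f μ :=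
  hf.integrable_of_hasCompactSupport (.of_compactSpace f)

section Twirl

-- Any norm would do for the matrix-valued integrals; this one makes matrices a C⋆-ring,
-- which bounds the unitary group.
open scoped Matrix.Norms.L2Operator

variable {ι : Type*} [Fintype ι] [DecidableEq ι]

instance Matrix.UnitaryGroup.instCompactSpace : CompactSpace (unitaryGroup ι ℂ) :=
  isCompact_iff_compactSpace.mp isCompact_unitary

lemma Matrix.integral_trace {X : Type*} [MeasurableSpace X] {ν : Measure X}
    {f : X → Matrix ι ι ℂ} (hf : Integrable f ν) : ∫ x, trace (f x) ∂ν = trace (∫ x, f x ∂ν) := by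
  simpa using (LinearMap.toContinuousLinearMap (traceLinearMap ι ℂ ℂ)).integral_comp_comm hf

namespace Matrix.UnitaryGroup

variable [MeasurableSpace (unitaryGroup ι ℂ)] [BorelSpace (unitaryGroup ι ℂ)]
  (μ : Measure (unitaryGroup ι ℂ))

noncomputable def twirl (M : Matrix ι ι ℂ) : Matrix ι ι ℂ :=
  ∫ U, (U : Matrix ι ι ℂ) * M * star (U : Matrix ι ι ℂ) ∂μ

variable [IsProbabilityMeasure μ]

lemma integrable_conj (M : Matrix ι ι ℂ) :
    Integrable (fun U : unitaryGroup ι ℂ => (U : Matrix ι ι ℂ) * M * star (U : Matrix ι ι ℂ)) μ :=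
  Continuous.integrable_of_compactSpace (by fun_prop)

lemma trace_twirl (M : Matrix ι ι ℂ) : trace (twirl μ M) = trace M := by
  rw [twirl, ← integral_trace (integrable_conj μ M)]
  simp [trace_mul_cycle]

variable [μ.IsMulLeftInvariant]

lemma conj_twirl (U : unitaryGroup ι ℂ) (M : Matrix ι ι ℂ) :
    (U : Matrix ι ι ℂ) * twirl μ M * star (U : Matrix ι ι ℂ) = twirl μ M := by
  rw [twirl, ← ContinuousLinearMap.mulLeftRight_apply ℂ,
    ← ContinuousLinearMap.integral_comp_comm _ (integrable_conj μ M)]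
  simpa [mul_assoc] using integral_mul_left_eq_self
    (fun V : unitaryGroup ι ℂ => (V : Matrix ι ι ℂ) * M * star (V : Matrix ι ι ℂ)) U

lemma commute_twirl {U : Matrix ι ι ℂ} (hU : U ∈ unitaryGroup ι ℂ) (M : Matrix ι ι ℂ) :
    Commute U (twirl μ M) :=
  calc U * twirl μ M = U * twirl μ M * (star U * U) := by
        rw [Unitary.star_mul_self_of_mem hU, mul_one]
    _ = twirl μ M * U := by rw [← mul_assoc, conj_twirl μ ⟨U, hU⟩]

lemma twirl_eq_smul_one [Nonempty ι] (M : Matrix ι ι ℂ) :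
    twirl μ M = (trace M / Fintype.card ι) • 1 := by
  obtain ⟨c, hc⟩ := mem_range_scalar_of_forall_commute_unitary fun _ hU => commute_twirl μ hU M
  have htr := trace_twirl μ M
  rw [← hc] at htr ⊢
  simp [← htr, smul_one_eq_diagonal]

lemma integral_trace_mul_conj [Nonempty ι] (X M : Matrix ι ι ℂ) :
    ∫ U, trace (X * (U : Matrix ι ι ℂ) * M * star (U : Matrix ι ι ℂ)) ∂μ =
      trace X * trace M / Fintype.card ι := by
  calc ∫ U, trace (X * (U : Matrix ι ι ℂ) * M * star (U : Matrix ι ι ℂ)) ∂μ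
      = trace (∫ U, X * ((U : Matrix ι ι ℂ) * M * star (U : Matrix ι ι ℂ)) ∂μ) := by
        rw [← integral_trace ((integrable_conj μ M).const_mul X)]
        simp only [mul_assoc]
    _ = trace (X * twirl μ M) := by
        rw [twirl]
        exact congrArg trace
          ((ContinuousLinearMap.mul ℂ _ X).integral_comp_comm (integrable_conj μ M))
    _ = trace X * trace M / Fintype.card ι := by
        simp [twirl_eq_smul_one, mul_div_assoc, mul_comm]

lemma integral_trace_mul_trace_star [Nonempty ι] :
    ∫ U, trace (U : Matrix ι ι ℂ) * trace (star (U : Matrix ι ι ℂ)) ∂μ = 1 := by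
  have hint (i j : ι) : Integrable (fun U : unitaryGroup ι ℂ =>
      trace (single j i 1 * (U : Matrix ι ι ℂ) * single i j 1 * star (U : Matrix ι ι ℂ))) μ :=
    Continuous.integrable_of_compactSpace (by fun_prop)
  have hdiag (i j : ι) :
      trace (single j i (1 : ℂ)) * trace (single i j 1) = if i = j then 1 else 0 := by
    rcases eq_or_ne i j with rfl | h <;> simp [*]
  simp_rw [trace_mul_trace_eq_sum]
  rw [integral_finsetSum _ fun i _ => integrable_finsetSum _ fun j _ => hint i j]
  simp_rw [integral_finsetSum _ fun j _ => hint _ j, integral_trace_mul_conj]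
  simp [hdiag, ← Finset.sum_div]

lemma integral_trace_commutator [Nonempty ι] :
    ∫ p : unitaryGroup ι ℂ × unitaryGroup ι ℂ,
      trace ((⁅p.1, p.2⁆ : unitaryGroup ι ℂ) : Matrix ι ι ℂ) ∂μ.prod μ = 1 / Fintype.card ι := by
  simp_rw [commutatorElement_def, UnitaryGroup.mul_val, UnitaryGroup.inv_val]
  rw [integral_prod _ (Continuous.integrable_of_compactSpace (by fun_prop))]
  simp_rw [integral_trace_mul_conj, integral_div, integral_trace_mul_trace_star]

end Matrix.UnitaryGroup

end Twirl

instance (n : ℕ) : BorelSpace (unitaryGroup (Fin n) ℂ) := ⟨rfl⟩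

/-- For `w = [x,y]` in the free group `F₂` and every `n ≥ 1`,
`Tr_{[x,y]}(n) = 1/n`. -/
theorem trw_commutator (n : ℕ) (hn : 1 ≤ n)
    (μ : Measure (Matrix.unitaryGroup (Fin n) ℂ)) [μ.IsHaarMeasure]
    [IsProbabilityMeasure μ] :
    trwl 2 n 1 μ (fun _ => ⁅FreeGroup.of (0 : Fin 2), FreeGroup.of (1 : Fin 2)⁆) =
      1 / (n : ℂ) := by
  have : NeZero n := ⟨by omega⟩
  have hword (A : Fin 2 → unitaryGroup (Fin n) ℂ) :
      FreeGroup.lift A ⁅FreeGroup.of (0 : Fin 2), FreeGroup.of (1 : Fin 2)⁆ = ⁅A 0, A 1⁆ := by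
    simp [map_commutatorElement]
  calc trwl 2 n 1 μ (fun _ => ⁅FreeGroup.of (0 : Fin 2), FreeGroup.of (1 : Fin 2)⁆)
      = ∫ A : Fin 2 → unitaryGroup (Fin n) ℂ,
          trace ((⁅A 0, A 1⁆ : unitaryGroup (Fin n) ℂ) : Matrix (Fin n) (Fin n) ℂ)
          ∂Measure.pi fun _ => μ := by
        simp [trwl, hword]
    _ = ∫ p : unitaryGroup (Fin n) ℂ × unitaryGroup (Fin n) ℂ,
          trace ((⁅p.1, p.2⁆ : unitaryGroup (Fin n) ℂ) : Matrix (Fin n) (Fin n) ℂ) ∂μ.prod μ :=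
        (measurePreserving_piFinTwo fun _ => μ).integral_comp
          (MeasurableEquiv.piFinTwo _).measurableEmbedding
          (fun p => trace ((⁅p.1, p.2⁆ : unitaryGroup (Fin n) ℂ) : Matrix (Fin n) (Fin n) ℂ))
    _ = 1 / n := by simpa using UnitaryGroup.integral_trace_commutator μ
end
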